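/- Let n ≥ 2, ρ > 0, and let p be a probability vector on {1,...,n}. For scores h on {1,...,n} satisfying the constraint Σ_y h(y) = 0, define the constrained ρ-hinge conditional risk C(h) = Σ_y p(y)·Σ_{y'≠y} max{0, 1 + h(y')/ρ} = Σ_y (1 − p(y))·max{0, 1 + h(y)/ρ}. Then for any such h with predicted label ĥ = argmax_y h(y): Σ_y (1 − p(y))·min{n, max{0, 1 + h(y)/ρ}} − n·(1 − max_y p(y)) ≥ max_y p(y) − p(ĥ). -/
import Mathlib


/-- Maximum of a real-valued function over `Fin n`, `n > 0`. -/
noncomputable def fmax {n : ℕ} (hn : 0 < n) (f : Fin n → ℝ) : ℝ :=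
  Finset.univ.sup' (Finset.univ_nonempty_iff.mpr ⟨⟨0, hn⟩⟩) f

theorem stmt_19 {n : ℕ} (hn : 2 ≤ n) (ρ : ℝ) (hρ : 0 < ρ)
    (p : Fin n → ℝ) (hp0 : ∀ y, 0 ≤ p y) (hpsum : ∑ y, p y = 1)
    (h : Fin n → ℝ) (hsum : ∑ y, h y = 0)
    (yhat : Fin n) (hyhat : ∀ y, h y ≤ h yhat) :
    (∑ y, p y * ∑ y' ∈ Finset.univ.erase y, max 0 (1 + h y' / ρ)
      = ∑ y, (1 - p y) * max 0 (1 + h y / ρ)) ∧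
    (fmax (by omega) p - p yhat
      ≤ ∑ y, (1 - p y) * min (n : ℝ) (max 0 (1 + h y / ρ))
          - n * (1 - fmax (by omega) p)) := by
  have hn0 : 0 < n := by omega
  have hn1 : (1 : ℝ) ≤ (n : ℝ) := Nat.one_le_cast.mpr hn0
  constructor
  · have herase : ∀ y : Fin n,
        ∑ y' ∈ Finset.univ.erase y, max 0 (1 + h y' / ρ)
          = (∑ y', max 0 (1 + h y' / ρ)) - max 0 (1 + h y / ρ) :=
      fun y => Finset.sum_erase_eq_sub (Finset.mem_univ y)
    simp only [herase, mul_sub, sub_mul, one_mul, Finset.sum_sub_distrib,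
      ← Finset.sum_mul, hpsum, one_mul]
  · -- abbreviations
    set φ : Fin n → ℝ := fun y => min (n : ℝ) (max 0 (1 + h y / ρ)) with hφ
    have hφ0 : ∀ y, 0 ≤ φ y := fun y =>
      le_min (by positivity) (le_max_left _ _)
    -- h yhat ≥ 0
    have hyh0 : 0 ≤ h yhat := by
      have h1 : ∑ y, h y ≤ ∑ _y : Fin n, h yhat :=
        Finset.sum_le_sum (fun y _ => hyhat y)
      rw [hsum, Finset.sum_const] at h1
      simp only [Finset.card_univ, Fintype.card_fin, nsmul_eq_mul] at h1
      nlinarith [hn1]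
    -- φ yhat ≥ 1
    have hφyhat : (1 : ℝ) ≤ φ yhat := by
      refine le_min hn1 (le_max_of_le_right ?_)
      have : 0 ≤ h yhat / ρ := div_nonneg hyh0 hρ.le
      linarith
    -- key: ∑ φ ≥ n
    have hφsum : (n : ℝ) ≤ ∑ y, φ y := by
      by_cases hc : ∃ y, (n : ℝ) < 1 + h y / ρ
      · obtain ⟨y0, hy0⟩ := hc
        have hφy0 : φ y0 = (n : ℝ) := by
          have h1 : max 0 (1 + h y0 / ρ) = 1 + h y0 / ρ :=
            max_eq_right (by linarith)
          simp only [hφ, h1]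
          exact min_eq_left hy0.le
        calc (n : ℝ) = φ y0 := hφy0.symm
          _ ≤ ∑ y, φ y :=
            Finset.single_le_sum (fun y _ => hφ0 y) (Finset.mem_univ y0)
      · push_neg at hc
        have heq : ∀ y, φ y = max 0 (1 + h y / ρ) := fun y =>
          min_eq_right (max_le (by positivity) (hc y))
        have h2 : ∀ y : Fin n, 1 + h y / ρ ≤ φ y := fun y => by
          rw [heq y]; exact le_max_right _ _
        have h3 : ∑ y : Fin n, (1 + h y / ρ) ≤ ∑ y, φ y :=
          Finset.sum_le_sum fun y _ => h2 y
        have h4 : ∑ y : Fin n, (1 + h y / ρ) = (n : ℝ) := by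
          rw [Finset.sum_add_distrib, ← Finset.sum_div, hsum]
          simp
        linarith
    -- generic inequality for any upper bound M with M ≤ 1
    suffices H : ∀ M : ℝ, (∀ y, p y ≤ M) → M ≤ 1 →
        M - p yhat ≤ ∑ y, (1 - p y) * φ y - n * (1 - M) by
      have hM1 : fmax hn0 p ≤ 1 := by
        rw [fmax]
        obtain ⟨ymax, -, hym⟩ := Finset.exists_mem_eq_sup'
          (Finset.univ_nonempty_iff.mpr ⟨⟨0, hn0⟩⟩) p
        rw [hym]
        calc p ymax ≤ ∑ y, p y :=
              Finset.single_le_sum (fun y _ => hp0 y) (Finset.mem_univ ymax)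
          _ = 1 := hpsum
      exact H (fmax hn0 p) (fun y => Finset.le_sup' p (Finset.mem_univ y)) hM1
    intro M hMle hM1
    have hsplit : ∑ y, (1 - p y) * φ y
        = (1 - M) * (∑ y, φ y) + ∑ y, (M - p y) * φ y := by
      rw [Finset.mul_sum, ← Finset.sum_add_distrib]
      exact Finset.sum_congr rfl fun y _ => by ring
    have hA : (1 - M) * (n : ℝ) ≤ (1 - M) * ∑ y, φ y :=
      mul_le_mul_of_nonneg_left hφsum (by linarith)
    have hB : (M - p yhat) * φ yhat ≤ ∑ y, (M - p y) * φ y :=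
      Finset.single_le_sum (f := fun y => (M - p y) * φ y)
        (fun y _ => mul_nonneg (by linarith [hMle y]) (hφ0 y))
        (Finset.mem_univ yhat)
    have hC : (M - p yhat) * 1 ≤ (M - p yhat) * φ yhat :=
      mul_le_mul_of_nonneg_left hφyhat (by linarith [hMle yhat])
    rw [hsplit]
    nlinarith [hA, hB, hC]
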